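/- arXiv:2602.17879 — 3 statements merged into one kernel-verified Lean document; each statement's English description precedes it below -/
import Mathlib

section
/- Define Φ : [0,T] × L²([0,T]; ℝ^m) → ℝ^m by Φ(t, f) := f̄(t), where f̄ is the precise representative of f. Then: (i) Φ is jointly Borel measurable with respect to the product of the Borel σ-algebra of [0,T] and the Borel σ-algebra of the norm topology of L²([0,T]; ℝ^m); and (ii) for every f ∈ L²([0,T]; ℝ^m) and every Borel representative g of f, one has Φ(t, f) = g(t) for Lebesgue-a.e. t ∈ [0,T]. -/
/-!
STATEMENT 1: Φ(t, f) := f̄(t), the precise representative of f evaluated at t, is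
(i) jointly Borel measurable on [0,T] × L²([0,T]; ℝ^m), and
(ii) for every Borel representative g of f, Φ(t, f) = g(t) for Lebesgue-a.e. t ∈ [0,T].
-/

open MeasureTheory Set Filter

/-- `avg μ f ε t = ε⁻¹ ∫_{max(t−ε,0)}^{t} f(s) dμ(s)`. -/
noncomputable def avg {ι : Type*} [Fintype ι] (μ : Measure ℝ)
    (f : ℝ → EuclideanSpace ℝ ι) (ε t : ℝ) : EuclideanSpace ℝ ι :=
  ε⁻¹ • ∫ s in Set.Ioc (max (t - ε) 0) t, f s ∂μ

/-- The componentwise liminf (in the extended reals) of the averages as ε ↓ 0. -/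
noncomputable def hatComp {ι : Type*} [Fintype ι] (μ : Measure ℝ)
    (f : ℝ → EuclideanSpace ℝ ι) (t : ℝ) (i : ι) : EReal :=
  liminf (fun ε : ℝ => ((avg μ f ε t i : ℝ) : EReal)) (nhdsWithin 0 (Set.Ioi 0))

open scoped Classical in
/-- The precise representative: equal to the componentwise liminf of averages when all the
components are finite, and `0` otherwise. -/
noncomputable def precise {ι : Type*} [Fintype ι] (μ : Measure ℝ)
    (f : ℝ → EuclideanSpace ℝ ι) (t : ℝ) : EuclideanSpace ℝ ι :=
  if ∀ i, hatComp μ f t i ≠ ⊤ ∧ hatComp μ f t i ≠ ⊥ then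
    (WithLp.equiv 2 (ι → ℝ)).symm fun i => (hatComp μ f t i).toReal
  else 0

/-- `L²` spaces carry the Borel σ-algebra of their norm topology. -/
noncomputable instance {α : Type*} [MeasurableSpace α] {μ : Measure α}
    {E : Type*} [NormedAddCommGroup E] {p : ENNReal} [Fact (1 ≤ p)] :
    MeasurableSpace (Lp E p μ) := borel _

instance {α : Type*} [MeasurableSpace α] {μ : Measure α}
    {E : Type*} [NormedAddCommGroup E] {p : ENNReal} [Fact (1 ≤ p)] :
    BorelSpace (Lp E p μ) := ⟨rfl⟩

/-- `Φ(t, f) = f̄(t)`: the precise representative of `f` evaluated at `t`. -/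
noncomputable def Phi (T : ℝ) (m : ℕ) (t : ℝ)
    (f : Lp (EuclideanSpace ℝ (Fin m)) 2 (volume.restrict (Set.Icc (0:ℝ) T))) :
    EuclideanSpace ℝ (Fin m) :=
  precise (volume.restrict (Set.Icc (0:ℝ) T)) (⇑f) t

/-!
For fixed `ε > 0` the average `avg μ f ε t` is `ε⁻¹` times a difference of two values of the
primitive `c ↦ ∫₀ᶜ f`. The primitive is continuous in `c` and, by Hölder's inequality on a finite
measure space, Lipschitz in `f ∈ Lᵖ` uniformly in `c`, so `(ε, t, f) ↦ avg μ f ε t` is jointly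
continuous. Continuity in `ε` allows the liminf as `ε ↓ 0` to be taken along rational `ε`,
a countably generated filter on a countable type, which makes every component of `f̂`, hence `f̄`,
measurable. For (ii), the averages are left difference quotients of the primitive of `g`, whose
derivative is `g t` at almost every `t` by the Lebesgue differentiation theorem, and the averages
only depend on the almost-everywhere class of `f`.
-/

open scoped ENNReal NNReal Topology Interval

section LpIntegral

variable {α E : Type*} [MeasurableSpace α] [NormedAddCommGroup E] {p : ℝ≥0∞} [Fact (1 ≤ p)]
  {μ : Measure α} [IsFiniteMeasure μ]

lemma MeasureTheory.Lp.integrable (f : Lp E p μ) : Integrable f μ :=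
  (Lp.memLp f).integrable Fact.out

lemma MeasureTheory.Lp.integral_norm_le (f : Lp E p μ) :
    ∫ x, ‖f x‖ ∂μ ≤ (μ univ ^ (1 - p.toReal⁻¹)).toReal * ‖f‖ := by
  have hL1 : eLpNorm f 1 μ ≤ eLpNorm f p μ * μ univ ^ (1 - p.toReal⁻¹) := by
    simpa using eLpNorm_le_eLpNorm_mul_rpow_measure_univ (μ := μ) (p := 1) (q := p) Fact.out
      (Lp.aestronglyMeasurable f)
  have hexp : p.toReal⁻¹ ≤ 1 := by
    rcases eq_or_ne p ⊤ with rfl | hp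
    · simp
    exact inv_le_one_of_one_le₀ (by simpa using ENNReal.toReal_mono hp (Fact.out : 1 ≤ p))
  rw [integral_norm_eq_lintegral_enorm (Lp.aestronglyMeasurable f),
    ← eLpNorm_one_eq_lintegral_enorm, Lp.norm_def, mul_comm, ← ENNReal.toReal_mul]
  exact ENNReal.toReal_mono (ENNReal.mul_ne_top (Lp.eLpNorm_ne_top f)
    (ENNReal.rpow_ne_top_of_nonneg (sub_nonneg.2 hexp) (measure_ne_top μ _))) hL1

end LpIntegral

section Primitive

variable {E : Type*} [NormedAddCommGroup E] [NormedSpace ℝ E] {p : ℝ≥0∞} [Fact (1 ≤ p)]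
  {μ : Measure ℝ} [IsFiniteMeasure μ]

lemma lipschitzWith_intervalIntegral_Lp (a b : ℝ) :
    LipschitzWith (μ univ ^ (1 - p.toReal⁻¹)).toNNReal
      (fun f : Lp E p μ => ∫ x in a..b, f x ∂μ) := by
  refine LipschitzWith.of_dist_le_mul fun f g => ?_
  have hsub : (∫ x in a..b, f x ∂μ) - ∫ x in a..b, g x ∂μ = ∫ x in a..b, (f - g) x ∂μ := by
    rw [← intervalIntegral.integral_sub (Lp.integrable f).intervalIntegrable
      (Lp.integrable g).intervalIntegrable]
    exact intervalIntegral.integral_congr_ae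
      ((Lp.coeFn_sub f g).mono fun x hx _ => hx.symm)
  calc dist (∫ x in a..b, f x ∂μ) (∫ x in a..b, g x ∂μ)
      = ‖∫ x in a..b, (f - g) x ∂μ‖ := by rw [dist_eq_norm, hsub]
    _ ≤ ∫ x in Ι a b, ‖(f - g) x‖ ∂μ := intervalIntegral.norm_integral_le_integral_norm_uIoc
    _ ≤ ∫ x, ‖(f - g) x‖ ∂μ :=
        setIntegral_le_integral (Lp.integrable _).norm (.of_forall fun _ => norm_nonneg _)
    _ ≤ _ := Lp.integral_norm_le _
    _ = _ := by rw [dist_eq_norm, ENNReal.coe_toNNReal_eq_toReal]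

lemma continuous_intervalIntegral_Lp [NullSingletonClass μ] (a : ℝ) :
    Continuous fun x : ℝ × Lp E p μ => ∫ s in a..x.1, x.2 s ∂μ :=
  continuous_prod_of_continuous_lipschitzWith' _ _
    (fun b => lipschitzWith_intervalIntegral_Lp a b)
    (fun f => (Lp.integrable f).continuous_primitive a)

end Primitive

section Liminf

lemma liminf_nhdsGT_eq_liminf_comap_ratCast {α : Type*} [CompleteLinearOrder α]
    [TopologicalSpace α] [OrderTopology α] {h : ℝ → α} {a : ℝ} (hh : ContinuousOn h (Ioi a)) :
    liminf h (𝓝[>] a) = liminf (fun q : ℚ => h q) (comap (↑) (𝓝[>] a)) := by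
  rw [(nhdsGT_basis a).liminf_eq_iSup_iInf, ((nhdsGT_basis a).comap _).liminf_eq_iSup_iInf]
  refine iSup_congr fun b => iSup_congr fun _ =>
    le_antisymm (le_iInf₂ fun q hq => iInf₂_le (q : ℝ) hq) (le_iInf₂ fun x hx => ?_)
  set S := Ioo a b ∩ range ((↑) : ℚ → ℝ)
  have hxS : x ∈ closure S := Rat.denseRange_cast.open_subset_closure_inter isOpen_Ioo hx
  have hS : h '' S ⊆ Ici (⨅ q ∈ ((↑) : ℚ → ℝ) ⁻¹' Ioo a b, h q) := by
    rintro _ ⟨_, ⟨hy, q, rfl⟩, rfl⟩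
    exact iInf₂_le q hy
  exact isClosed_Ici.closure_subset_iff.2 hS
    ((hh.continuousAt (Ioi_mem_nhds hx.1)).continuousWithinAt.mem_closure_image hxS)

lemma Measurable.liminf_of_countable {δ ι α : Type*} [MeasurableSpace δ] [Countable ι]
    [ConditionallyCompleteLinearOrder α] [TopologicalSpace α] [OrderTopology α]
    [SecondCountableTopology α] [MeasurableSpace α] [BorelSpace α]
    {f : ι → δ → α} {v : Filter ι} [v.IsCountablyGenerated] (hf : ∀ i, Measurable (f i)) :
    Measurable fun x => Filter.liminf (fun i => f i x) v := by
  obtain ⟨s, hs⟩ := v.exists_antitone_basis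
  exact .liminf' hf ⟨hs.toHasBasis, to_countable _⟩ fun _ => to_countable _

end Liminf

lemma intervalIntegral_indicator_eq_restrict {E : Type*} [NormedAddCommGroup E] [NormedSpace ℝ E]
    {ν : Measure ℝ} {s : Set ℝ} (hs : MeasurableSet s) (f : ℝ → E) (a b : ℝ) :
    ∫ x in a..b, s.indicator f x ∂ν = ∫ x in a..b, f x ∂ν.restrict s := by
  simp only [intervalIntegral, setIntegral_indicator hs,
    Measure.restrict_restrict measurableSet_Ioc]

section Average

variable {ι : Type*} [Fintype ι] {μ : Measure ℝ}

lemma avg_of_nonpos (f : ℝ → EuclideanSpace ℝ ι) {ε : ℝ} (t : ℝ) (hε : ε ≤ 0) :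
    avg μ f ε t = 0 := by
  rw [avg, Ioc_eq_empty (not_lt.2 (le_max_of_le_left (by linarith))), Measure.restrict_empty,
    integral_zero_measure, smul_zero]

lemma avg_eq_sub {f : ℝ → EuclideanSpace ℝ ι} (hf : Integrable f μ) {ε t : ℝ} (hε : 0 ≤ ε)
    (ht : 0 ≤ t) :
    avg μ f ε t = ε⁻¹ • ((∫ s in 0..t, f s ∂μ) - ∫ s in 0..max (t - ε) 0, f s ∂μ) := by
  rw [intervalIntegral.integral_interval_sub_left hf.intervalIntegrable hf.intervalIntegrable,
    intervalIntegral.integral_of_le (max_le (by linarith) ht), avg]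

lemma avg_congr_ae {f g : ℝ → EuclideanSpace ℝ ι} (h : f =ᵐ[μ] g) : avg μ f = avg μ g := by
  ext ε t : 2
  rw [avg, avg, integral_congr_ae (ae_restrict_of_ae h)]

lemma precise_congr_ae {f g : ℝ → EuclideanSpace ℝ ι} (h : f =ᵐ[μ] g) :
    precise μ f = precise μ g := by
  ext t : 1
  unfold precise hatComp
  rw [avg_congr_ae h]

lemma precise_eq_of_tendsto {f : ℝ → EuclideanSpace ℝ ι} {t : ℝ} {v : EuclideanSpace ℝ ι}
    (h : Tendsto (fun ε => avg μ f ε t) (𝓝[>] 0) (𝓝 v)) : precise μ f t = v := by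
  have hcomp (i : ι) : hatComp μ f t i = (v i : EReal) :=
    ((continuous_coe_real_ereal.tendsto _).comp
      (((PiLp.continuous_apply 2 _ i).tendsto _).comp h)).liminf_eq
  rw [precise, if_pos (fun i => by simp [hcomp i])]
  ext i
  simp [hcomp i]

lemma tendsto_avg_of_hasDerivAt {f : ℝ → EuclideanSpace ℝ ι} (hf : Integrable f μ) {t : ℝ}
    {v : EuclideanSpace ℝ ι} (ht : 0 < t) (hd : HasDerivAt (fun x => ∫ s in 0..x, f s ∂μ) v t) :
    Tendsto (fun ε => avg μ f ε t) (𝓝[>] 0) (𝓝 v) := by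
  have hneg : Tendsto (fun ε : ℝ => -ε) (𝓝[>] 0) (𝓝[<] 0) := by
    simpa using tendsto_neg_nhdsGT_neg (a := (0 : ℝ))
  refine (hd.tendsto_slope_zero_left.comp hneg).congr' ?_
  filter_upwards [Ioo_mem_nhdsGT ht] with ε hε
  rw [Function.comp_apply, avg_eq_sub hf hε.1.le ht.le, max_eq_left (by linarith [hε.2]),
    ← sub_eq_add_neg, inv_neg, neg_smul, ← smul_neg, neg_sub]

variable [IsFiniteMeasure μ] [NullSingletonClass μ] {p : ℝ≥0∞} [Fact (1 ≤ p)]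

lemma continuousOn_avg :
    ContinuousOn (fun x : ℝ × ℝ × Lp (EuclideanSpace ℝ ι) p μ => avg μ x.2.2 x.1 x.2.1)
      (Ioi (0 : ℝ) ×ˢ Ici (0 : ℝ) ×ˢ univ) := by
  have hF := continuous_intervalIntegral_Lp (E := EuclideanSpace ℝ ι) (p := p) (μ := μ) 0
  have hdiff : ContinuousOn (fun x : ℝ × ℝ × Lp (EuclideanSpace ℝ ι) p μ => x.1⁻¹ •
      ((∫ s in 0..x.2.1, x.2.2 s ∂μ) - ∫ s in 0..max (x.2.1 - x.1) 0, x.2.2 s ∂μ))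
      (Ioi (0 : ℝ) ×ˢ Ici (0 : ℝ) ×ˢ univ) := by
    apply ContinuousOn.fun_smul
    · exact continuousOn_fst.inv₀ fun x hx => ne_of_gt hx.1
    · exact ((hF.comp (continuous_snd.fst.prodMk continuous_snd.snd)).sub (hF.comp
        (((continuous_snd.fst.sub continuous_fst).max continuous_const).prodMk
          continuous_snd.snd))).continuousOn
  exact hdiff.congr fun x hx => avg_eq_sub (Lp.integrable _) hx.1.le hx.2.1

lemma hatComp_eq_liminf_ratCast (f : Lp (EuclideanSpace ℝ ι) p μ) {t : ℝ} (ht : 0 ≤ t) (i : ι) :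
    hatComp μ f t i =
      liminf (fun q : ℚ => ((avg μ f q t i : ℝ) : EReal)) (comap (↑) (𝓝[>] (0 : ℝ))) := by
  refine liminf_nhdsGT_eq_liminf_comap_ratCast (continuous_coe_real_ereal.comp_continuousOn
    ((PiLp.continuous_apply 2 _ i).comp_continuousOn ?_))
  exact continuousOn_avg.comp (by fun_prop : Continuous fun ε : ℝ => (ε, t, f)).continuousOn
    fun ε hε => ⟨hε, ht, trivial⟩

lemma measurable_hatComp {X : Type*} [TopologicalSpace X] [MeasurableSpace X]
    [OpensMeasurableSpace X] {t : X → ℝ} {F : X → Lp (EuclideanSpace ℝ ι) p μ}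
    (ht : Continuous t) (ht₀ : ∀ x, 0 ≤ t x) (hF : Continuous F) (i : ι) :
    Measurable fun x => hatComp μ (F x) (t x) i := by
  simp_rw [hatComp_eq_liminf_ratCast _ (ht₀ _)]
  refine Measurable.liminf_of_countable fun q => ?_
  rcases le_or_gt (q : ℝ) 0 with hq | hq
  · simp only [avg_of_nonpos _ _ hq]
    exact measurable_const
  · have hcont := continuousOn_avg.comp_continuous (continuous_const.prodMk (ht.prodMk hF))
      fun x => ⟨hq, ht₀ x, trivial⟩
    exact (continuous_coe_real_ereal.comp ((PiLp.continuous_apply 2 _ i).comp hcont)).measurable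

end Average

lemma measurable_precise {ι X : Type*} [Fintype ι] [MeasurableSpace X] {μ : Measure ℝ}
    {F : X → ℝ → EuclideanSpace ℝ ι} {t : X → ℝ}
    (h : ∀ i, Measurable fun x => hatComp μ (F x) (t x) i) :
    Measurable fun x => precise μ (F x) (t x) := by
  have hfinite : MeasurableSet
      {x | ∀ i, hatComp μ (F x) (t x) i ≠ ⊤ ∧ hatComp μ (F x) (t x) i ≠ ⊥} := by
    simp only [ofPred_forall, ofPred_and]
    exact .iInter fun i =>
      (h i (measurableSet_singleton ⊤).compl).inter (h i (measurableSet_singleton ⊥).compl)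
  exact Measurable.ite hfinite ((MeasurableEquiv.toLp 2 (ι → ℝ)).measurable.comp
    (measurable_pi_iff.2 fun i => (h i).ereal_toReal)) measurable_const

lemma ae_precise_restrict_Icc_eq {ι : Type*} [Fintype ι] {f : ℝ → EuclideanSpace ℝ ι} {T : ℝ}
    (hf : IntegrableOn f (Icc 0 T)) :
    ∀ᵐ t ∂volume.restrict (Icc 0 T), precise (volume.restrict (Icc 0 T)) f t = f t := by
  have hLDT := LocallyIntegrable.ae_hasDerivAt_integral
    (hf.integrable_indicator measurableSet_Icc).locallyIntegrable
  have hpos : ∀ᵐ t ∂volume.restrict (Icc 0 T), t ∈ Ioc 0 T := by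
    rw [← Measure.restrict_congr_set Ioc_ae_eq_Icc]
    exact ae_restrict_mem measurableSet_Ioc
  filter_upwards [ae_restrict_of_ae hLDT, hpos] with t hd ht
  refine precise_eq_of_tendsto (tendsto_avg_of_hasDerivAt hf ht.1 ?_)
  simpa [intervalIntegral_indicator_eq_restrict measurableSet_Icc,
    indicator_of_mem (Ioc_subset_Icc_self ht)] using hd 0

theorem stmt_1_general (T : ℝ) (m : ℕ) :
    -- (i) joint Borel measurability on [0,T] × L²
    Measurable
      (fun p : Set.Icc (0:ℝ) T ×
          Lp (EuclideanSpace ℝ (Fin m)) 2 (volume.restrict (Set.Icc (0:ℝ) T)) =>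
        Phi T m (p.1 : ℝ) p.2) ∧
    -- (ii) Φ(·, f) agrees Lebesgue-a.e. on [0,T] with every Borel representative of f
    (∀ (f : Lp (EuclideanSpace ℝ (Fin m)) 2 (volume.restrict (Set.Icc (0:ℝ) T)))
        (g : ℝ → EuclideanSpace ℝ (Fin m)), Measurable g →
        g =ᵐ[volume.restrict (Set.Icc (0:ℝ) T)] f →
        ∀ᵐ t ∂(volume.restrict (Set.Icc (0:ℝ) T)), Phi T m t f = g t) := by
  refine ⟨measurable_precise fun i => measurable_hatComp (continuous_subtype_val.comp
    continuous_fst) (fun x => x.1.2.1) continuous_snd i, fun f g _ hfg => ?_⟩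
  filter_upwards [ae_precise_restrict_Icc_eq ((Lp.integrable f).congr hfg.symm)] with t ht
  rw [Phi, precise_congr_ae hfg.symm, ht]

theorem stmt_1 (T : ℝ) (hT : 0 < T) (m : ℕ) (hm : 0 < m) :
    -- (i) joint Borel measurability on [0,T] × L²
    Measurable
      (fun p : Set.Icc (0:ℝ) T ×
          Lp (EuclideanSpace ℝ (Fin m)) 2 (volume.restrict (Set.Icc (0:ℝ) T)) =>
        Phi T m (p.1 : ℝ) p.2) ∧
    -- (ii) Φ(·, f) agrees Lebesgue-a.e. on [0,T] with every Borel representative of f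
    (∀ (f : Lp (EuclideanSpace ℝ (Fin m)) 2 (volume.restrict (Set.Icc (0:ℝ) T)))
        (g : ℝ → EuclideanSpace ℝ (Fin m)), Measurable g →
        g =ᵐ[volume.restrict (Set.Icc (0:ℝ) T)] f →
        ∀ᵐ t ∂(volume.restrict (Set.Icc (0:ℝ) T)), Phi T m t f = g t) :=
  stmt_1_general T m
end

section
/- Let (Ω, ℱ, ℙ) be a probability space, U a Polish space with Borel σ-algebra, 𝔲 : Ω → U measurable with law m := ℙ ∘ 𝔲⁻¹, and let Ξ¹, Ξ² : Ω → ℝ^N be square-integrable random variables. For i = 1, 2 let κⁱ be a regular conditional distribution of Ξⁱ given 𝔲. Then ∫_U W₂²(κ¹_u, κ²_u) dm(u) ≤ 𝔼[|Ξ¹ − Ξ²|²]. -/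
/-!
STATEMENT 4: If κ¹, κ² are regular conditional distributions of square-integrable ℝ^N-valued
random variables Ξ¹, Ξ² given 𝔲, then ∫_U W₂²(κ¹_u, κ²_u) dm(u) ≤ 𝔼[|Ξ¹ − Ξ²|²].
-/

open MeasureTheory

/-- The squared Wasserstein-2 distance: the infimum of `∫ d(x,y)² dπ` over all couplings π
of μ and ν (measures on E × E with first marginal μ and second marginal ν). -/
noncomputable def W2sq {E : Type*} [MeasurableSpace E] [PseudoEMetricSpace E]
    (μ ν : Measure E) : ENNReal :=
  ⨅ (π : Measure (E × E)) (_ : π.map Prod.fst = μ) (_ : π.map Prod.snd = ν),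
    ∫⁻ p, edist p.1 p.2 ^ 2 ∂π

/-- `κ` is a regular conditional distribution of `ξ` given `u` under `P`: a Markov kernel such
that `P(ξ ∈ B, u ∈ D) = ∫_D κ_v(B) dm(v)` where `m = P ∘ u⁻¹`. -/
def IsRCD {Ω U E : Type*} [MeasurableSpace Ω] [MeasurableSpace U] [MeasurableSpace E]
    (P : Measure Ω) (ξ : Ω → E) (u : Ω → U) (κ : U → Measure E) : Prop :=
  (∀ v, IsProbabilityMeasure (κ v)) ∧
  (∀ B : Set E, MeasurableSet B → Measurable fun v => κ v B) ∧
  (∀ B : Set E, MeasurableSet B → ∀ D : Set U, MeasurableSet D →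
    P (ξ ⁻¹' B ∩ u ⁻¹' D) = ∫⁻ v in D, κ v B ∂(P.map u))

/-!
The conditional law of the pair `(Ξ₁, Ξ₂)` given `u` is, for `m`-almost every `v`, a coupling of
`κ₁ v` and `κ₂ v`: its marginals are conditional laws of `Ξ₁` and `Ξ₂` given `u`, and those agree
`m`-a.e. with `κ₁` and `κ₂` by uniqueness of disintegrations. Hence `W₂²(κ₁ v, κ₂ v)` is at most
the transport cost of that coupling, whose `m`-integral is `𝔼|Ξ₁ − Ξ₂|²`.
-/

open ProbabilityTheory

lemma W2sq_fst_snd_le {E : Type*} [MeasurableSpace E] [PseudoEMetricSpace E]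
    (π : Measure (E × E)) : W2sq π.fst π.snd ≤ ∫⁻ p, edist p.1 p.2 ^ 2 ∂π :=
  iInf₂_le_of_le π rfl (iInf_le _ rfl)

lemma lintegral_W2sq_condDistrib_le {α β E : Type*} [MeasurableSpace α] [MeasurableSpace β]
    [PseudoEMetricSpace E] [PolishSpace E] [MeasurableSpace E] [BorelSpace E] [Nonempty E]
    {μ : Measure α} [IsFiniteMeasure μ] {X : α → β} {Y₁ Y₂ : α → E}
    (hX : Measurable X) (hY₁ : Measurable Y₁) (hY₂ : Measurable Y₂) :
    ∫⁻ b, W2sq (condDistrib Y₁ X μ b) (condDistrib Y₂ X μ b) ∂μ.map X ≤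
      ∫⁻ a, edist (Y₁ a) (Y₂ a) ^ 2 ∂μ := by
  set Y : α → E × E := fun a ↦ (Y₁ a, Y₂ a)
  have hY : Measurable Y := hY₁.prodMk hY₂
  have hcost : Measurable fun p : E × E ↦ edist p.1 p.2 ^ 2 :=
    (measurable_fst.edist measurable_snd).pow_const 2
  have h₁ : condDistrib Y₁ X μ =ᵐ[μ.map X] (condDistrib Y X μ).map Prod.fst :=
    condDistrib_comp X hY.aemeasurable measurable_fst
  have h₂ : condDistrib Y₂ X μ =ᵐ[μ.map X] (condDistrib Y X μ).map Prod.snd :=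
    condDistrib_comp X hY.aemeasurable measurable_snd
  calc ∫⁻ b, W2sq (condDistrib Y₁ X μ b) (condDistrib Y₂ X μ b) ∂μ.map X
      ≤ ∫⁻ b, ∫⁻ p, edist p.1 p.2 ^ 2 ∂condDistrib Y X μ b ∂μ.map X := by
        refine lintegral_mono_ae ?_
        filter_upwards [h₁, h₂] with b hb₁ hb₂
        rw [hb₁, hb₂, Kernel.map_apply _ measurable_fst, Kernel.map_apply _ measurable_snd]
        exact W2sq_fst_snd_le _
    _ = ∫⁻ p, edist p.1 p.2 ^ 2 ∂μ.map Y := by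
        rw [← condDistrib_comp_map hX.aemeasurable hY.aemeasurable,
          Measure.lintegral_bind (Kernel.aemeasurable _) hcost.aemeasurable]
    _ = ∫⁻ a, edist (Y₁ a) (Y₂ a) ^ 2 ∂μ := lintegral_map hcost hY

namespace IsRCD

variable {Ω U E : Type*} [MeasurableSpace Ω] [MeasurableSpace U] [MeasurableSpace E]
  {P : Measure Ω} {ξ : Ω → E} {u : Ω → U} {κ : U → Measure E}

def toKernel (h : IsRCD P ξ u κ) : Kernel U E :=
  ⟨κ, Measure.measurable_of_measurable_coe _ h.2.1⟩

instance isMarkovKernel_toKernel (h : IsRCD P ξ u κ) : IsMarkovKernel h.toKernel :=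
  ⟨h.1⟩

lemma map_prodMk_eq_compProd [IsFiniteMeasure P] (h : IsRCD P ξ u κ) (hu : Measurable u)
    (hξ : Measurable ξ) : P.map (fun ω ↦ (u ω, ξ ω)) = P.map u ⊗ₘ h.toKernel := by
  refine Measure.ext_prod fun {D B} hD hB ↦ ?_
  have hpre : (fun ω ↦ (u ω, ξ ω)) ⁻¹' (D ×ˢ B) = ξ ⁻¹' B ∩ u ⁻¹' D := Set.inter_comm _ _
  rw [Measure.map_apply (hu.prodMk hξ) (hD.prod hB), hpre, h.2.2 B hB D hD,
    Measure.compProd_apply_prod hD hB]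
  rfl

lemma condDistrib_ae_eq [StandardBorelSpace E] [Nonempty E] [IsFiniteMeasure P]
    (h : IsRCD P ξ u κ) (hu : Measurable u) (hξ : Measurable ξ) :
    ∀ᵐ v ∂P.map u, condDistrib ξ u P v = κ v :=
  condDistrib_ae_eq_of_measure_eq_compProd u hξ.aemeasurable (h.map_prodMk_eq_compProd hu hξ)

end IsRCD

theorem stmt_4_general (N : ℕ)
    (Ω : Type*) [MeasurableSpace Ω] (P : Measure Ω) [IsProbabilityMeasure P]
    (U : Type*) [MeasurableSpace U]
    (u : Ω → U) (hu : Measurable u)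
    (Ξ₁ Ξ₂ : Ω → EuclideanSpace ℝ (Fin N))
    (hΞ₁m : Measurable Ξ₁) (hΞ₂m : Measurable Ξ₂)
    (κ₁ κ₂ : U → Measure (EuclideanSpace ℝ (Fin N)))
    (hκ₁ : IsRCD P Ξ₁ u κ₁) (hκ₂ : IsRCD P Ξ₂ u κ₂) :
    ∫⁻ v, W2sq (κ₁ v) (κ₂ v) ∂(P.map u) ≤ ∫⁻ ω, edist (Ξ₁ ω) (Ξ₂ ω) ^ 2 ∂P := by
  calc ∫⁻ v, W2sq (κ₁ v) (κ₂ v) ∂P.map u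
      = ∫⁻ v, W2sq (condDistrib Ξ₁ u P v) (condDistrib Ξ₂ u P v) ∂P.map u := by
        refine lintegral_congr_ae ?_
        filter_upwards [hκ₁.condDistrib_ae_eq hu hΞ₁m, hκ₂.condDistrib_ae_eq hu hΞ₂m]
          with v hv₁ hv₂
        rw [hv₁, hv₂]
    _ ≤ ∫⁻ ω, edist (Ξ₁ ω) (Ξ₂ ω) ^ 2 ∂P := lintegral_W2sq_condDistrib_le hu hΞ₁m hΞ₂m

theorem stmt_4 (N : ℕ) (hN : 0 < N)
    (Ω : Type*) [MeasurableSpace Ω] (P : Measure Ω) [IsProbabilityMeasure P]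
    (U : Type*) [TopologicalSpace U] [PolishSpace U] [MeasurableSpace U] [BorelSpace U]
    (u : Ω → U) (hu : Measurable u)
    (Ξ₁ Ξ₂ : Ω → EuclideanSpace ℝ (Fin N))
    (hΞ₁m : Measurable Ξ₁) (hΞ₂m : Measurable Ξ₂)
    (hΞ₁ : MemLp Ξ₁ 2 P) (hΞ₂ : MemLp Ξ₂ 2 P)
    (κ₁ κ₂ : U → Measure (EuclideanSpace ℝ (Fin N)))
    (hκ₁ : IsRCD P Ξ₁ u κ₁) (hκ₂ : IsRCD P Ξ₂ u κ₂) :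
    ∫⁻ v, W2sq (κ₁ v) (κ₂ v) ∂(P.map u) ≤ ∫⁻ ω, edist (Ξ₁ ω) (Ξ₂ ω) ^ 2 ∂P :=
  stmt_4_general N Ω P U u hu Ξ₁ Ξ₂ hΞ₁m hΞ₂m κ₁ κ₂ hκ₁ hκ₂
end

section
/- Let (Ω, ℱ, ℙ) be a probability space, U and X and W Polish spaces with their Borel σ-algebras, and let 𝔲 : Ω → U, χ : Ω → X, B : Ω → W be measurable with m := ℙ ∘ 𝔲⁻¹. Assume B is independent of the pair (χ, 𝔲), and let κ be a regular conditional distribution of χ given 𝔲. Let L : U × X × W → ℝᵏ be Borel measurable. Then, for m-a.e. u ∈ U, a regular conditional distribution of L(𝔲, χ, B) given 𝔲 evaluated at u equals the pushforward of the product measure κ_u ⊗ (ℙ ∘ B⁻¹) under the map (x, w) ↦ L(u, x, w); that is, conditional on 𝔲 = u, L(𝔲, χ, B) has the same law as L(u, χᵘ, Bᵘ) where χᵘ ∼ κ_u and Bᵘ ∼ ℙ ∘ B⁻¹ are independent. -/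
/-!
STATEMENT 6: If B is independent of (χ, 𝔲), κ is a regular conditional distribution of χ given
𝔲 and L is Borel, then for m-a.e. u, any regular conditional distribution of L(𝔲, χ, B) given 𝔲
evaluated at u equals the pushforward of κ_u ⊗ Law(B) under (x, w) ↦ L(u, x, w).
-/

open MeasureTheory ProbabilityTheory

/-- Auxiliary: an RCD kernel disintegrates the joint law. -/
lemma isRCD_map_eq_compProd {Ω U E : Type*} [MeasurableSpace Ω] [MeasurableSpace U]
    [MeasurableSpace E] (P : Measure Ω) [IsProbabilityMeasure P] {ξ : Ω → E} {u : Ω → U}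
    (hu : Measurable u) (hξ : Measurable ξ) (κ : Kernel U E) [IsMarkovKernel κ]
    (h : ∀ B : Set E, MeasurableSet B → ∀ D : Set U, MeasurableSet D →
      P (ξ ⁻¹' B ∩ u ⁻¹' D) = ∫⁻ v in D, κ v B ∂(P.map u)) :
    P.map (fun ω => (u ω, ξ ω)) = (P.map u) ⊗ₘ κ := by
  have hm : IsProbabilityMeasure (P.map u) := Measure.isProbabilityMeasure_map hu.aemeasurable
  refine ext_of_generate_finite _ generateFrom_prod.symm isPiSystem_prod ?_ ?_
  · rintro _ ⟨s, hs, t, ht, rfl⟩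
    rw [Measure.map_apply (hu.prodMk hξ) (hs.prod ht),
      Measure.compProd_apply_prod hs ht, ← h t ht s hs]
    congr 1
    ext ω
    simp only [Set.mem_preimage, Set.mem_prod, Set.mem_inter_iff]
    tauto
  · simp [Measure.map_apply (hu.prodMk hξ) MeasurableSet.univ]

theorem stmt_6 (k : ℕ) (hk : 0 < k)
    (Ω : Type*) [MeasurableSpace Ω] (P : Measure Ω) [IsProbabilityMeasure P]
    (U : Type*) [TopologicalSpace U] [PolishSpace U] [MeasurableSpace U] [BorelSpace U]
    (X : Type*) [TopologicalSpace X] [PolishSpace X] [MeasurableSpace X] [BorelSpace X]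
    (W : Type*) [TopologicalSpace W] [PolishSpace W] [MeasurableSpace W] [BorelSpace W]
    (u : Ω → U) (χ : Ω → X) (B : Ω → W)
    (hu : Measurable u) (hχ : Measurable χ) (hB : Measurable B)
    -- B is independent of the pair (χ, 𝔲)
    (hindep : IndepFun B (fun ω => (χ ω, u ω)) P)
    -- κ is a regular conditional distribution of χ given 𝔲
    (κ : U → Measure X) (hκ : IsRCD P χ u κ)
    (L : U → X → W → EuclideanSpace ℝ (Fin k))
    (hL : Measurable fun q : U × X × W => L q.1 q.2.1 q.2.2)
    -- ρ is a regular conditional distribution of L(𝔲, χ, B) given 𝔲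
    (ρ : U → Measure (EuclideanSpace ℝ (Fin k)))
    (hρ : IsRCD P (fun ω => L (u ω) (χ ω) (B ω)) u ρ) :
    ∀ᵐ v ∂(P.map u),
      ρ v = ((κ v).prod (P.map B)).map (fun q : X × W => L v q.1 q.2) := by
  classical
  set m := P.map u with hm_def
  set β := P.map B with hβ_def
  haveI : IsProbabilityMeasure m := Measure.isProbabilityMeasure_map hu.aemeasurable
  haveI : IsProbabilityMeasure β := Measure.isProbabilityMeasure_map hB.aemeasurable
  -- kernels
  let Kκ : Kernel U X := ⟨κ, Measure.measurable_of_measurable_coe _ hκ.2.1⟩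
  haveI : IsMarkovKernel Kκ := ⟨fun v => hκ.1 v⟩
  let Kρ : Kernel U (EuclideanSpace ℝ (Fin k)) :=
    ⟨ρ, Measure.measurable_of_measurable_coe _ hρ.2.1⟩
  haveI : IsMarkovKernel Kρ := ⟨fun v => hρ.1 v⟩
  have hΞ : Measurable fun ω => L (u ω) (χ ω) (B ω) :=
    hL.comp (hu.prodMk (hχ.prodMk hB))
  have hLv : ∀ v : U, Measurable fun q : X × W => L v q.1 q.2 := fun v =>
    hL.comp ((measurable_const (a := v)).prodMk measurable_id)
  -- the candidate kernel
  set ν : U → Measure (EuclideanSpace ℝ (Fin k)) :=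
    fun v => ((κ v).prod β).map (fun q : X × W => L v q.1 q.2) with hν_def
  have hνprob : ∀ v, IsProbabilityMeasure (ν v) := fun v => by
    haveI := hκ.1 v
    exact Measure.isProbabilityMeasure_map (hLv v).aemeasurable
  -- formula for ν v E as a double integral
  have hν_apply : ∀ (E : Set (EuclideanSpace ℝ (Fin k))), MeasurableSet E → ∀ v,
      ν v E = ∫⁻ x, β {w | L v x w ∈ E} ∂(κ v) := by
    intro E hE v
    rw [hν_def, Measure.map_apply (hLv v) hE,
      Measure.prod_apply ((hLv v) hE)]
    rfl
  -- measurability of v ↦ ν v E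
  have hsec : ∀ (E : Set (EuclideanSpace ℝ (Fin k))), MeasurableSet E →
      Measurable fun p : U × X => β {w | L p.1 p.2 w ∈ E} := by
    intro E hE
    have ht : MeasurableSet {q : (U × X) × W | L q.1.1 q.1.2 q.2 ∈ E} := by
      have : Measurable fun q : (U × X) × W => L q.1.1 q.1.2 q.2 :=
        hL.comp ((measurable_fst.comp measurable_fst).prodMk
          ((measurable_snd.comp measurable_fst).prodMk measurable_snd))
      exact this hE
    have := Kernel.measurable_kernel_prodMk_left (κ := Kernel.const (U × X) β) ht
    simpa using this
  have hνmeas : ∀ (E : Set (EuclideanSpace ℝ (Fin k))), MeasurableSet E →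
      Measurable fun v => ν v E := by
    intro E hE
    simp_rw [hν_apply E hE]
    exact Measurable.lintegral_kernel_prod_right (κ := Kκ) (hsec E hE)
  let Kν : Kernel U (EuclideanSpace ℝ (Fin k)) :=
    ⟨ν, Measure.measurable_of_measurable_coe _ hνmeas⟩
  haveI : IsMarkovKernel Kν := ⟨fun v => hνprob v⟩
  -- joint law of (u, χ)
  have hjoint1 : P.map (fun ω => (u ω, χ ω)) = m ⊗ₘ Kκ :=
    isRCD_map_eq_compProd P hu hχ Kκ hκ.2.2
  -- independence: (u, χ) independent of B
  have hindep' : IndepFun (fun ω => (u ω, χ ω)) B P := by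
    have := hindep.symm.comp (φ := fun p : X × U => (p.2, p.1)) (ψ := id)
      (measurable_snd.prodMk measurable_fst) measurable_id
    exact this
  have hprodlaw : P.map (fun ω => ((u ω, χ ω), B ω)) =
      (P.map (fun ω => (u ω, χ ω))).prod β := by
    exact (indepFun_iff_map_prod_eq_prod_map_map (hu.prodMk hχ).aemeasurable
      hB.aemeasurable).mp hindep'
  -- ν is an RCD of L(u, χ, B) given u
  have hν3 : ∀ E : Set (EuclideanSpace ℝ (Fin k)), MeasurableSet E →
      ∀ D : Set U, MeasurableSet D →
      P ((fun ω => L (u ω) (χ ω) (B ω)) ⁻¹' E ∩ u ⁻¹' D) = ∫⁻ v in D, ν v E ∂m := by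
    intro E hE D hD
    set A : Set ((U × X) × W) := {q | q.1.1 ∈ D ∧ L q.1.1 q.1.2 q.2 ∈ E} with hA_def
    have hA : MeasurableSet A := by
      refine MeasurableSet.inter ?_ ?_
      · exact (measurable_fst.comp measurable_fst) hD
      · exact (hL.comp ((measurable_fst.comp measurable_fst).prodMk
          ((measurable_snd.comp measurable_fst).prodMk measurable_snd))) hE
    have hpre : (fun ω => ((u ω, χ ω), B ω)) ⁻¹' A =
        (fun ω => L (u ω) (χ ω) (B ω)) ⁻¹' E ∩ u ⁻¹' D := by
      ext ω
      simp only [hA_def, Set.mem_preimage, Set.mem_setOf_eq, Set.mem_inter_iff]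
      tauto
    have hmeasA : Measurable fun ω => ((u ω, χ ω), B ω) :=
      (hu.prodMk hχ).prodMk hB
    rw [← hpre, ← Measure.map_apply hmeasA hA, hprodlaw, Measure.prod_apply hA, hjoint1]
    have hfA : Measurable fun p : U × X => β (Prod.mk p ⁻¹' A) := by
      have := Kernel.measurable_kernel_prodMk_left (κ := Kernel.const (U × X) β) hA
      simpa using this
    rw [Measure.lintegral_compProd hfA]
    have hinner : ∀ v, (∫⁻ x, β (Prod.mk (v, x) ⁻¹' A) ∂(Kκ v)) =
        D.indicator (fun v => ν v E) v := by
      intro v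
      by_cases hv : v ∈ D
      · rw [Set.indicator_of_mem hv, hν_apply E hE v]
        congr 1 with x
        congr 1
        ext w
        simp [hA_def, hv]
      · rw [Set.indicator_of_notMem hv]
        have : ∀ x : X, Prod.mk (v, x) ⁻¹' A = (∅ : Set W) := by
          intro x; ext w; simp [hA_def, hv]
        simp [this]
    simp_rw [hinner]
    rw [lintegral_indicator hD]
  -- both kernels disintegrate the joint law of (u, Ξ)
  set ρ₀ : Measure (U × EuclideanSpace ℝ (Fin k)) :=
    P.map (fun ω => (u ω, L (u ω) (χ ω) (B ω))) with hρ₀_def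
  haveI : IsProbabilityMeasure ρ₀ := Measure.isProbabilityMeasure_map (hu.prodMk hΞ).aemeasurable
  have hfst : ρ₀.fst = m := by
    rw [hρ₀_def, Measure.fst_map_prodMk hΞ]
  have hρ₀ρ : ρ₀ = ρ₀.fst ⊗ₘ Kρ := by
    rw [hfst]; exact isRCD_map_eq_compProd P hu hΞ Kρ hρ.2.2
  have hρ₀ν : ρ₀ = ρ₀.fst ⊗ₘ Kν := by
    rw [hfst]; exact isRCD_map_eq_compProd P hu hΞ Kν hν3
  have h1 := eq_condKernel_of_measure_eq_compProd (ρ := ρ₀) Kρ hρ₀ρ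
  have h2 := eq_condKernel_of_measure_eq_compProd (ρ := ρ₀) Kν hρ₀ν
  rw [hfst] at h1 h2
  filter_upwards [h1, h2] with v hv1 hv2
  have : Kρ v = Kν v := hv1.trans hv2.symm
  exact this
end
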